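/- If the feasible set of schedules is finite and each Dinkelbach iteration exactly maximizes the parametric function Φ, then the iteration terminates in finitely many steps with residual zero, and the final schedule globally maximizes J. -/
import Mathlib


/-- Finite termination of the Dinkelbach iteration under a finite feasible set:
there exists a step N at which the residual is zero and the schedule S_N globally
maximizes J over X. -/
theorem dinkelbach_finite_termination {α : Type*}
    (F G Ctot : α → ℝ) (H : ℝ) (hH : 0 < H)
    (X : Set α) (hXne : X.Nonempty) (hXfin : X.Finite)
    (hGpos : ∀ S ∈ X, 0 < G S)
    (J : α → ℝ) (hJ : ∀ S, J S = F S / G S - Ctot S / H)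
    (Φ : ℝ → α → ℝ) (hΦ : ∀ θ S, Φ θ S = G S * H * (J S - θ))
    (S : ℕ → α) (θ : ℕ → ℝ)
    (hSX : ∀ k, S k ∈ X)
    (hθ : ∀ k, θ (k + 1) = J (S k))
    (hmax : ∀ k, ∀ T ∈ X, Φ (θ (k + 1)) T ≤ Φ (θ (k + 1)) (S (k + 1))) :
    ∃ N, Φ (θ (N + 1)) (S (N + 1)) = 0 ∧ ∀ T ∈ X, J T ≤ J (S (N + 1)) := by
  -- residual is nonnegative at every step
  have hnonneg : ∀ k, 0 ≤ Φ (θ (k + 1)) (S (k + 1)) := by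
    intro k
    have h0 : Φ (θ (k + 1)) (S k) = 0 := by
      rw [hΦ, hθ]; ring
    have := hmax k (S k) (hSX k)
    linarith
  -- if residual is always nonzero, J ∘ S is strictly increasing, contradiction
  by_contra hcon
  push_neg at hcon
  have hpos : ∀ k, 0 < Φ (θ (k + 1)) (S (k + 1)) := by
    intro k
    rcases lt_or_eq_of_le (hnonneg k) with h | h
    · exact h
    · exfalso
      obtain ⟨T, hT, hlt⟩ := hcon k h.symm
      have hT0 : Φ (θ (k + 1)) T ≤ 0 := by
        rw [← h.symm] at *; linarith [hmax k T hT]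
      rw [hΦ] at hT0
      have hGT := hGpos T hT
      have h1 : J T - θ (k + 1) ≤ 0 := by
        by_contra h2
        push_neg at h2
        nlinarith [mul_pos (mul_pos hGT hH) h2]
      -- J (S (k+1)) = θ (k+1) since residual is zero
      have h3 : Φ (θ (k + 1)) (S (k + 1)) = 0 := h.symm
      rw [hΦ] at h3
      have hGS := hGpos (S (k + 1)) (hSX (k + 1))
      have h4 : J (S (k + 1)) - θ (k + 1) = 0 := by
        rcases mul_eq_zero.mp h3 with h5 | h5
        · exfalso; nlinarith [mul_pos hGS hH]
        · exact h5
      have : θ (k+1) = J (S k) := hθ k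
      linarith
  have hmono : StrictMono (fun k => J (S k)) := by
    apply strictMono_nat_of_lt_succ
    intro k
    have := hpos k
    rw [hΦ, hθ] at this
    have hGS := hGpos (S (k + 1)) (hSX (k + 1))
    nlinarith [mul_pos hGS hH]
  have hinj : Function.Injective (fun k => J (S k)) := hmono.injective
  have hmem : ∀ k, J (S k) ∈ J '' X := fun k => ⟨S k, hSX k, rfl⟩
  exact (Set.infinite_of_injective_forall_mem hinj hmem) (hXfin.image J)
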